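/- For a tensor v in the algebraic tensor product V₁ ⊗ₐ ⋯ ⊗ₐ V_d of vector spaces, and any α, the following are equivalent: (i) the minimal subspace U_α^min(v) has dimension r_α for all α; (ii) for each α there exist linearly independent vectors u₁^{(α)},…,u_{r_α}^{(α)} in V_α and linearly independent tensors U₁^{(α)},…,U_{r_α}^{(α)} in ⊗_{β≠α} V_β such that v = Σ_{i=1}^{r_α} u_i^{(α)} ⊗ U_i^{(α)}. -/

import Mathlib

open scoped TensorProduct

/-- The subspace of `⨂[K] i, V i` consisting of tensors that lie in the (image of the) tensor
product of the subspaces `W i ⊆ V i`, i.e. the range of `⨂ (W i).subtype`. -/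
noncomputable def restrictedRange {ι : Type*} [Fintype ι] {K : Type*} [Field K]
    {V : ι → Type*} [∀ i, AddCommGroup (V i)] [∀ i, Module K (V i)]
    (W : ∀ i, Submodule K (V i)) : Submodule K (⨂[K] i, V i) :=
  LinearMap.range (PiTensorProduct.map fun i => (W i).subtype)

/-- The pairing `V i × (⨂_{j ≠ i} V j) → ⨂_j V j`, `(x, T) ↦ x ⊗ T`, realizing the canonical
identification of `⨂_j V j` with `V i ⊗ (⨂_{j ≠ i} V j)`. -/
noncomputable def pairAt {ι : Type*} [Fintype ι] [DecidableEq ι] {K : Type*} [Field K]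
    {V : ι → Type*} [∀ i, AddCommGroup (V i)] [∀ i, Module K (V i)]
    (i : ι) (x : V i) : (⨂[K] j : {j : ι // j ≠ i}, V j) →ₗ[K] ⨂[K] j, V j :=
  PiTensorProduct.lift
    ((MultilinearMap.domDomRestrictₗ (PiTensorProduct.tprod K (s := V)) (fun j => j ≠ i))
      (fun j => cast (congrArg V (not_not.mp j.2)).symm x))

set_option maxHeartbeats 1000000
set_option linter.unusedSectionVars false

section Aux

variable {ι : Type*} [Fintype ι] [DecidableEq ι] {K : Type*} [Field K]
    {V : ι → Type*} [∀ i, AddCommGroup (V i)] [∀ i, Module K (V i)]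

/-- Extend a family on `{j // j ≠ i}` by `0` at `i`. -/
def extend0 (i : ι) (g : ∀ j : {j : ι // j ≠ i}, V j) : ∀ j, V j :=
  fun j' => if h : j' ≠ i then g ⟨j', h⟩ else 0

lemma restrict_extend0 (i : ι) (g : ∀ j : {j : ι // j ≠ i}, V j) :
    (fun j : {j : ι // j ≠ i} => extend0 i g j.1) = g := by
  funext j; exact dif_pos j.2

lemma pairAt_tprod (i : ι) (x : V i) (g : ∀ j : {j : ι // j ≠ i}, V j) :
    pairAt i x (PiTensorProduct.tprod K g)
      = PiTensorProduct.tprod K (Function.update (extend0 i g) i x) := by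
  rw [pairAt, PiTensorProduct.lift.tprod]
  refine congrArg (PiTensorProduct.tprod K) (funext fun j => ?_)
  by_cases hj : j = i
  · subst hj
    rw [Function.update_self, dif_neg (not_not_intro rfl)]
    exact eq_of_heq (cast_heq _ _)
  · rw [dif_pos hj, Function.update_of_ne hj]
    simp [extend0, hj]

lemma restrict_update_ne {i : ι} (m : ∀ j, V j) {j₀ : ι} (h : j₀ ≠ i) (a : V j₀) :
    (fun j : {j : ι // j ≠ i} => Function.update m j₀ a j.1)
      = Function.update (fun j : {j : ι // j ≠ i} => m j.1) ⟨j₀, h⟩ a := by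
  funext j
  rcases eq_or_ne j ⟨j₀, h⟩ with rfl | hj
  · simp
  · have h1 : j.1 ≠ j₀ := fun e => hj (Subtype.ext e)
    rw [Function.update_of_ne hj, Function.update_of_ne h1]

lemma restrict_update_eq {i : ι} (m : ∀ j, V j) (a : V i) :
    (fun j : {j : ι // j ≠ i} => Function.update m i a j.1)
      = fun j : {j : ι // j ≠ i} => m j.1 := by
  funext j
  rw [Function.update_of_ne j.2]

/-- Contraction along a dual functional on the complementary tensor product. -/
noncomputable def contractAux (i : ι) (f : (⨂[K] j : {j : ι // j ≠ i}, V j) →ₗ[K] K) :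
    MultilinearMap K V (V i) where
  toFun m := f (PiTensorProduct.tprod K fun j : {j : ι // j ≠ i} => m j.1) • m i
  map_update_add' m j₀ a b := by
    by_cases h : j₀ = i
    · subst h
      rw [restrict_update_eq, restrict_update_eq, restrict_update_eq,
        Function.update_self, Function.update_self, Function.update_self, smul_add]
    · rw [restrict_update_ne m h, restrict_update_ne m h, restrict_update_ne m h,
        Function.update_of_ne (Ne.symm h), Function.update_of_ne (Ne.symm h),
        Function.update_of_ne (Ne.symm h), MultilinearMap.map_update_add, map_add, add_smul]
  map_update_smul' m j₀ c a := by
    by_cases h : j₀ = i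
    · subst h
      rw [restrict_update_eq, restrict_update_eq,
        Function.update_self, Function.update_self, smul_comm]
    · rw [restrict_update_ne m h, restrict_update_ne m h,
        Function.update_of_ne (Ne.symm h), Function.update_of_ne (Ne.symm h),
        MultilinearMap.map_update_smul, map_smul, smul_assoc]

noncomputable def contract (i : ι) (f : (⨂[K] j : {j : ι // j ≠ i}, V j) →ₗ[K] K) :
    (⨂[K] j, V j) →ₗ[K] V i :=
  PiTensorProduct.lift (contractAux i f)

lemma contract_tprod (i : ι) (f : (⨂[K] j : {j : ι // j ≠ i}, V j) →ₗ[K] K) (m : ∀ j, V j) :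
    contract i f (PiTensorProduct.tprod K m)
      = f (PiTensorProduct.tprod K fun j : {j : ι // j ≠ i} => m j.1) • m i := by
  rw [contract, PiTensorProduct.lift.tprod]; rfl

/-- A version of contraction with values in the complementary tensor product. -/
noncomputable def cocontractAux (i : ι) (e : V i →ₗ[K] K) :
    MultilinearMap K V (⨂[K] j : {j : ι // j ≠ i}, V j) where
  toFun m := e (m i) • PiTensorProduct.tprod K (fun j : {j : ι // j ≠ i} => m j.1)
  map_update_add' m j₀ a b := by
    by_cases h : j₀ = i
    · subst h
      rw [restrict_update_eq, restrict_update_eq, restrict_update_eq,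
        Function.update_self, Function.update_self, Function.update_self, map_add, add_smul]
    · rw [restrict_update_ne m h, restrict_update_ne m h, restrict_update_ne m h,
        Function.update_of_ne (Ne.symm h), Function.update_of_ne (Ne.symm h),
        Function.update_of_ne (Ne.symm h), MultilinearMap.map_update_add, smul_add]
  map_update_smul' m j₀ c a := by
    by_cases h : j₀ = i
    · subst h
      rw [restrict_update_eq, restrict_update_eq,
        Function.update_self, Function.update_self, map_smul, smul_assoc]
    · rw [restrict_update_ne m h, restrict_update_ne m h,
        Function.update_of_ne (Ne.symm h), Function.update_of_ne (Ne.symm h),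
        MultilinearMap.map_update_smul, smul_comm]

noncomputable def cocontract (i : ι) (e : V i →ₗ[K] K) :
    (⨂[K] j, V j) →ₗ[K] ⨂[K] j : {j : ι // j ≠ i}, V j :=
  PiTensorProduct.lift (cocontractAux i e)

lemma cocontract_tprod (i : ι) (e : V i →ₗ[K] K) (m : ∀ j, V j) :
    cocontract i e (PiTensorProduct.tprod K m)
      = e (m i) • PiTensorProduct.tprod K (fun j : {j : ι // j ≠ i} => m j.1) := by
  rw [cocontract, PiTensorProduct.lift.tprod]; rfl

lemma contract_pairAt (i : ι) (f : (⨂[K] j : {j : ι // j ≠ i}, V j) →ₗ[K] K)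
    (x : V i) (T : ⨂[K] j : {j : ι // j ≠ i}, V j) :
    contract i f (pairAt i x T) = f T • x := by
  induction T using PiTensorProduct.induction_on with
  | smul_tprod c g =>
    rw [map_smul, map_smul, map_smul, pairAt_tprod, contract_tprod, restrict_update_eq,
      Function.update_self, restrict_extend0, smul_smul, smul_eq_mul]
  | add a b ha hb =>
    rw [map_add, map_add, map_add, ha, hb, add_smul]

lemma tprod_mem_restrictedRange {W : ∀ j, Submodule K (V j)} {m : ∀ j, V j}
    (hm : ∀ j, m j ∈ W j) : PiTensorProduct.tprod K m ∈ restrictedRange W :=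
  ⟨PiTensorProduct.tprod K (fun j => ⟨m j, hm j⟩), by rw [PiTensorProduct.map_tprod]; rfl⟩

lemma contract_mem (i : ι) (f : (⨂[K] j : {j : ι // j ≠ i}, V j) →ₗ[K] K)
    {W : ∀ j, Submodule K (V j)} {v : ⨂[K] j, V j} (hv : v ∈ restrictedRange W) :
    contract i f v ∈ W i := by
  obtain ⟨w, rfl⟩ := hv
  induction w using PiTensorProduct.induction_on with
  | smul_tprod c n =>
    rw [map_smul, map_smul, PiTensorProduct.map_tprod, contract_tprod]
    exact Submodule.smul_mem _ _ (Submodule.smul_mem _ _ (n i).2)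
  | add a b ha hb =>
    rw [map_add, map_add]; exact add_mem ha hb

lemma pairAt_mem (i : ι) {U : Submodule K (V i)} {x : V i} (hx : x ∈ U)
    (T : ⨂[K] j : {j : ι // j ≠ i}, V j) :
    pairAt i x T ∈
      restrictedRange (Function.update (fun j => (⊤ : Submodule K (V j))) i U) := by
  induction T using PiTensorProduct.induction_on with
  | smul_tprod c g =>
    rw [map_smul]
    refine Submodule.smul_mem _ _ ?_
    rw [pairAt_tprod]
    refine tprod_mem_restrictedRange fun j => ?_
    by_cases hj : j = i
    · subst hj
      rw [Function.update_self, Function.update_self]; exact hx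
    · rw [Function.update_of_ne hj, Function.update_of_ne hj]; exact Submodule.mem_top
  | add a b ha hb =>
    rw [map_add]; exact add_mem ha hb

lemma pairAt_add (i : ι) (x y : V i) (T : ⨂[K] j : {j : ι // j ≠ i}, V j) :
    pairAt i (x + y) T = pairAt i x T + pairAt i y T := by
  induction T using PiTensorProduct.induction_on with
  | smul_tprod c g =>
    rw [map_smul, map_smul, map_smul, ← smul_add]
    rw [pairAt_tprod, pairAt_tprod, pairAt_tprod]
    exact congrArg (c • ·) (MultilinearMap.map_update_add _ _ _ _ _) |>.trans rfl
  | add a b ha hb =>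
    rw [map_add, map_add, map_add, ha, hb]; abel

lemma pairAt_smul (i : ι) (c : K) (x : V i) (T : ⨂[K] j : {j : ι // j ≠ i}, V j) :
    pairAt i (c • x) T = c • pairAt i x T := by
  induction T using PiTensorProduct.induction_on with
  | smul_tprod c' g =>
    rw [map_smul, map_smul, smul_comm]
    rw [pairAt_tprod, pairAt_tprod]
    exact congrArg (c' • ·) (MultilinearMap.map_update_smul _ _ _ _ _)
  | add a b ha hb =>
    rw [map_add, map_add, ha, hb, smul_add]

lemma exists_dual_family {M : Type*} [AddCommGroup M] [Module K M] {n : ℕ} {T : Fin n → M}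
    (hT : LinearIndependent K T) (k : Fin n) :
    ∃ f : M →ₗ[K] K, ∀ l, f (T l) = if l = k then 1 else 0 := by
  obtain ⟨g, hg⟩ := LinearMap.exists_extend ((Module.Basis.span hT).coord k)
  refine ⟨g, fun l => ?_⟩
  have h1 : T l = (Submodule.span K (Set.range T)).subtype (Module.Basis.span hT l) := by
    rw [Submodule.coe_subtype, Module.Basis.span_apply]
  rw [h1, ← LinearMap.comp_apply, hg, Module.Basis.coord_apply, Module.Basis.repr_self,
    Finsupp.single_apply]


lemma update_extend0_restrict (i : ι) (m : ∀ j, V j) (x : V i) :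
    Function.update (extend0 i (fun j : {j : ι // j ≠ i} => m j.1)) i x
      = Function.update m i x := by
  funext j
  by_cases hj : j = i
  · subst hj; rw [Function.update_self, Function.update_self]
  · rw [Function.update_of_ne hj, Function.update_of_ne hj]
    exact dif_pos hj

/-- Key identity: reconstruction of a tensor in `restrictedRange W` from its
cocontractions against a dual basis of `W i`. -/
lemma sum_pairAt_cocontract (i : ι) {W : ∀ j, Submodule K (V j)} {n : ℕ}
    (b : Module.Basis (Fin n) K (W i)) (ε : Fin n → (V i →ₗ[K] K))
    (hε : ∀ k, (ε k).comp (W i).subtype = b.coord k)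
    {v : ⨂[K] j, V j} (hv : v ∈ restrictedRange W) :
    ∑ k : Fin n, pairAt i ((b k : V i)) (cocontract i (ε k) v) = v := by
  obtain ⟨w, rfl⟩ := hv
  induction w using PiTensorProduct.induction_on with
  | smul_tprod c f =>
    rw [map_smul, PiTensorProduct.map_tprod]
    set m : ∀ j, V j := fun j => ((W j).subtype (f j)) with hm
    have hεk : ∀ k, ε k (m i) = b.repr (f i) k := by
      intro k
      have := congrArg (fun φ => φ (f i)) (hε k)
      simpa [Module.Basis.coord_apply, hm] using this
    have step : ∀ k : Fin n, pairAt i (b k : V i)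
        (cocontract i (ε k) (c • PiTensorProduct.tprod K m))
        = (c * b.repr (f i) k) •
            PiTensorProduct.tprod K (Function.update m i (b k : V i)) := by
      intro k
      rw [map_smul, cocontract_tprod, map_smul, map_smul, pairAt_tprod,
        update_extend0_restrict, hεk k, smul_smul]
    rw [Finset.sum_congr rfl (fun k _ => step k)]
    have h2 : ∑ k : Fin n, b.repr (f i) k • (b k : V i) = m i := by
      simp only [hm, Submodule.subtype_apply]
      conv_rhs => rw [← b.sum_repr (f i)]
      simp only [Submodule.coe_sum, Submodule.coe_smul]
    calc ∑ k : Fin n, (c * b.repr (f i) k) •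
            PiTensorProduct.tprod K (Function.update m i (b k : V i))
        = c • PiTensorProduct.tprod K (Function.update m i
            (∑ k : Fin n, b.repr (f i) k • (b k : V i))) := by
          rw [MultilinearMap.map_update_sum, Finset.smul_sum]
          refine Finset.sum_congr rfl fun k _ => ?_
          rw [MultilinearMap.map_update_smul, smul_smul]
      _ = c • PiTensorProduct.tprod K m := by rw [h2, Function.update_eq_self]
  | add y z hy hz =>
    rw [map_add]
    calc ∑ k : Fin n, pairAt i ((b k : V i)) (cocontract i (ε k)
            ((PiTensorProduct.map fun j => (W j).subtype) y
              + (PiTensorProduct.map fun j => (W j).subtype) z))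
        = ∑ k : Fin n,
            (pairAt i ((b k : V i)) (cocontract i (ε k)
              ((PiTensorProduct.map fun j => (W j).subtype) y))
            + pairAt i ((b k : V i)) (cocontract i (ε k)
              ((PiTensorProduct.map fun j => (W j).subtype) z))) := by
          refine Finset.sum_congr rfl fun k _ => ?_
          rw [map_add, map_add]
      _ = _ := by rw [Finset.sum_add_distrib, hy, hz]

lemma indep_of_min (i : ι) {v : ⨂[K] j, V j} {Umin : ∀ j, Submodule K (V j)}
    [FiniteDimensional K (Umin i)] {n : ℕ} (hn : Module.finrank K (Umin i) = n)
    (hmin : ∀ U : Submodule K (V i),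
      v ∈ restrictedRange (Function.update (fun j => (⊤ : Submodule K (V j))) i U) →
        Umin i ≤ U)
    (u : Fin n → V i) (T : Fin n → ⨂[K] j : {j : ι // j ≠ i}, V j)
    (hv : v = ∑ k : Fin n, pairAt i (u k) (T k)) :
    LinearIndependent K T := by
  classical
  by_contra hdep
  obtain ⟨g, hg0, j, hgj⟩ := Fintype.not_linearIndependent_iff.mp hdep
  have hn0 : 0 < n := j.pos
  set s : Finset (Fin n) := Finset.univ.erase j with hs
  set w : Fin n → V i := fun k => u k + (-((g j)⁻¹ * g k)) • u j with hw
  have hTj : T j = ∑ k ∈ s, (-((g j)⁻¹ * g k)) • T k := by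
    have h2 := Finset.add_sum_erase Finset.univ (fun k => g k • T k) (Finset.mem_univ j)
    rw [hg0] at h2
    have h1 : g j • T j = - ∑ k ∈ s, g k • T k := eq_neg_of_add_eq_zero_left h2
    calc T j = (g j)⁻¹ • (g j • T j) := (inv_smul_smul₀ hgj _).symm
      _ = (g j)⁻¹ • (- ∑ k ∈ s, g k • T k) := by rw [h1]
      _ = ∑ k ∈ s, (-((g j)⁻¹ * g k)) • T k := by
          rw [smul_neg, Finset.smul_sum, ← Finset.sum_neg_distrib]
          exact Finset.sum_congr rfl fun k _ => by rw [smul_smul, neg_smul]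
  have hv' : v = ∑ k ∈ s, pairAt i (w k) (T k) := by
    rw [hv, ← Finset.add_sum_erase Finset.univ _ (Finset.mem_univ j), hTj, map_sum]
    rw [← Finset.sum_add_distrib]
    refine Finset.sum_congr rfl fun k _ => ?_
    rw [map_smul, ← pairAt_smul, ← pairAt_add, add_comm ((-((g j)⁻¹ * g k)) • u j) (u k)]
  have hvU : v ∈ restrictedRange (Function.update (fun j' => (⊤ : Submodule K (V j'))) i
      (Submodule.span K (↑(s.image w) : Set (V i)))) := by
    rw [hv']
    exact Submodule.sum_mem _ fun k hk => pairAt_mem i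
      (Submodule.subset_span (Finset.mem_coe.mpr (Finset.mem_image_of_mem w hk))) _
  have hle := hmin _ hvU
  haveI : FiniteDimensional K (Submodule.span K (↑(s.image w) : Set (V i))) :=
    FiniteDimensional.span_of_finite K (Finset.finite_toSet _)
  have h3 : n ≤ Module.finrank K (Submodule.span K (↑(s.image w) : Set (V i))) := by
    have h := Submodule.finrank_mono hle
    rwa [hn] at h
  have h4 : Module.finrank K (Submodule.span K (↑(s.image w) : Set (V i))) ≤ s.card :=
    le_trans (finrank_span_finset_le_card _) Finset.card_image_le
  have h5 : s.card = n - 1 := by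
    rw [hs, Finset.card_erase_of_mem (Finset.mem_univ j), Finset.card_univ, Fintype.card_fin]
  omega

lemma forward_exists (i : ι) {v : ⨂[K] j, V j} {Umin : ∀ j, Submodule K (V j)}
    [∀ j, FiniteDimensional K (Umin j)]
    (hmem : v ∈ restrictedRange Umin)
    (hmin : ∀ U : Submodule K (V i),
      v ∈ restrictedRange (Function.update (fun j => (⊤ : Submodule K (V j))) i U) →
        Umin i ≤ U)
    {n : ℕ} (hn : Module.finrank K (Umin i) = n) :
    ∃ (u : Fin n → V i) (T : Fin n → ⨂[K] j : {j : ι // j ≠ i}, V j),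
      LinearIndependent K u ∧ LinearIndependent K T ∧
        v = ∑ k : Fin n, pairAt i (u k) (T k) := by
  let b : Module.Basis (Fin n) K (Umin i) := Module.finBasisOfFinrankEq K (Umin i) hn
  have hchoice : ∀ k : Fin n, ∃ g : V i →ₗ[K] K, g.comp (Umin i).subtype = b.coord k :=
    fun k => LinearMap.exists_extend _
  choose ε hε using hchoice
  have hkey := sum_pairAt_cocontract i b ε hε hmem
  refine ⟨fun k => (b k : V i), fun k => cocontract i (ε k) v, ?_, ?_, hkey.symm⟩
  · exact b.linearIndependent.map' (Umin i).subtype (Submodule.ker_subtype _)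
  · exact indep_of_min i hn hmin (fun k => (b k : V i)) _ hkey.symm

lemma backward_eq (i : ι) {v : ⨂[K] j, V j} {Umin : ∀ j, Submodule K (V j)}
    [∀ j, FiniteDimensional K (Umin j)]
    (hmem : v ∈ restrictedRange Umin)
    (hmin : ∀ U : Submodule K (V i),
      v ∈ restrictedRange (Function.update (fun j => (⊤ : Submodule K (V j))) i U) →
        Umin i ≤ U)
    {n : ℕ} (u : Fin n → V i) (T : Fin n → ⨂[K] j : {j : ι // j ≠ i}, V j)
    (hu : LinearIndependent K u) (hT : LinearIndependent K T)
    (hv : v = ∑ k : Fin n, pairAt i (u k) (T k)) :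
    Module.finrank K (Umin i) = n := by
  haveI : FiniteDimensional K (Submodule.span K (Set.range u)) :=
    FiniteDimensional.span_of_finite K (Set.finite_range u)
  have hle1 : Umin i ≤ Submodule.span K (Set.range u) := by
    refine hmin _ ?_
    rw [hv]
    exact Submodule.sum_mem _ fun k _ =>
      pairAt_mem i (Submodule.subset_span (Set.mem_range_self k)) _
  have hA : Module.finrank K (Umin i) ≤ n := by
    have := Submodule.finrank_mono hle1
    rwa [finrank_span_eq_card hu, Fintype.card_fin] at this
  have humem : ∀ k, u k ∈ Umin i := by
    intro k
    obtain ⟨f, hf⟩ := exists_dual_family hT k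
    have hcv : contract i f v = u k := by
      rw [hv, map_sum]
      have hstep : ∀ l, contract i f (pairAt i (u l) (T l))
          = (if l = k then (1 : K) else 0) • u l := fun l => by rw [contract_pairAt, hf]
      rw [Finset.sum_congr rfl fun l _ => hstep l]
      simp [ite_smul]
    rw [← hcv]
    exact contract_mem i f hmem
  have hle2 : Submodule.span K (Set.range u) ≤ Umin i :=
    Submodule.span_le.mpr (Set.range_subset_iff.mpr humem)
  have hB : n ≤ Module.finrank K (Umin i) := by
    have := Submodule.finrank_mono hle2
    rwa [finrank_span_eq_card hu, Fintype.card_fin] at this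
  omega

end Aux

/-- For a tensor `v ∈ V₁ ⊗ₐ ⋯ ⊗ₐ V_d` with minimal subspaces
`Umin α` (characterized by: `v` lies in `⨂_α Umin α`, and whenever `v ∈ U ⊗ (⨂_{β≠α} V_β)`
then `Umin α ⊆ U`), the following are equivalent: (i) `dim (Umin α) = r α` for all `α`;
(ii) for each `α` there are linearly independent `u₁,…,u_{r_α} ∈ V_α` and linearly independent
tensors `T₁,…,T_{r_α} ∈ ⊗_{β≠α} V_β` with `v = Σ_k u_k ⊗ T_k`. -/
theorem stmt14 {d : ℕ} {K : Type*} [Field K] {V : Fin d → Type*}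
    [∀ i, AddCommGroup (V i)] [∀ i, Module K (V i)]
    (v : ⨂[K] i, V i) (r : Fin d → ℕ)
    (Umin : ∀ i, Submodule K (V i)) [∀ i, FiniteDimensional K (Umin i)]
    (hmem : v ∈ restrictedRange Umin)
    (hmin : ∀ (i : Fin d) (U : Submodule K (V i)),
      v ∈ restrictedRange (Function.update (fun j => (⊤ : Submodule K (V j))) i U) →
        Umin i ≤ U) :
    (∀ i, Module.finrank K (Umin i) = r i) ↔
      (∀ i : Fin d, ∃ (u : Fin (r i) → V i) (T : Fin (r i) → ⨂[K] j : {j : Fin d // j ≠ i}, V j),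
        LinearIndependent K u ∧ LinearIndependent K T ∧
          v = ∑ k : Fin (r i), pairAt i (u k) (T k)) := by
  constructor
  · intro h i
    exact forward_exists i hmem (hmin i) (h i)
  · intro h i
    obtain ⟨u, T, hu, hT, hv⟩ := h i
    exact backward_eq i hmem (hmin i) u T hu hT hv
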